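/- Let m < M be real numbers, let J be an interval containing [m, M], and let f : J → ℝ be a continuous convex function. Let A_i, B_i, C_i, D_i ∈ σ(J) (i = 1,…,n) satisfy A_i + D_i = B_i + C_i, A_i ≤ m·I, m·I ≤ B_i ≤ M·I, m·I ≤ C_i ≤ M·I and M·I ≤ D_i for each i, and let Φ_1,…,Φ_n be positive linear maps on B(H) with Σ_{i=1}^n Φ_i(I) = I. Then Σ_i Φ_i(f(B_i)) + f(Σ_i Φ_i(C_i)) ≤ f(Σ_i Φ_i(D_i)) + Σ_i Φ_i(f(A_i)) − δ_f · X̃₃ ≤ f(Σ_i Φ_i(D_i)) + Σ_i Φ_i(f(A_i)), where X̃₃ = I − (1/(M−m))·[ Σ_i Φ_i(|B_i − ((m+M)/2)·I|) + |Σ_i Φ_i(C_i) − ((m+M)/2)·I| ]. -/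

import Mathlib

/-!
Let `c = (m + M) / 2`, `δ = f m + f M - 2 f c`, let `ℓ` be the chord of `f` over `[m, M]` and
`tent t = 1/2 - |t - c| / (M - m)`, which vanishes at `m` and `M` and is affine on `[m, c]` and on
`[c, M]`. On each of these halves `f` lies below its chord, and that chord plus `δ • tent` is `ℓ`;
hence `f + δ • tent ≤ ℓ` on `[m, M]`, while `ℓ ≤ f` on `J` outside `(m, M)`. The continuous
functional calculus and the positivity and unitality of `∑ Φᵢ` turn these into
`∑ Φᵢ f(Bᵢ) + δ ∑ Φᵢ tent(Bᵢ) ≤ ℓ(∑ Φᵢ Bᵢ)`, `f(C') + δ tent(C') ≤ ℓ(C')`,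
`ℓ(∑ Φᵢ Aᵢ) ≤ ∑ Φᵢ f(Aᵢ)` and `ℓ(D') ≤ f(D')`, where `C' = ∑ Φᵢ Cᵢ`, `D' = ∑ Φᵢ Dᵢ`. As `ℓ` is
affine and `∑ Φᵢ Bᵢ + C' = ∑ Φᵢ Aᵢ + D'`, adding them gives the first inequality, with
`X̃₃ = ∑ Φᵢ tent(Bᵢ) + tent(C') ≥ 0`; the second follows from `δ ≥ 0`.
-/

/-- The absolute value of a (self-adjoint) bounded operator, via the
continuous functional calculus. -/
noncomputable def opAbs {H : Type*} [NormedAddCommGroup H] [InnerProductSpace ℂ H]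
    [CompleteSpace H] (A : H →L[ℂ] H) : H →L[ℂ] H :=
  cfc (fun t : ℝ => |t|) A

open Set

/-- The chord of `f` over `[a, b]`, as an affine map on any `ℝ`-algebra so that it can be
applied to operators. -/
noncomputable def chord {A : Type*} [Ring A] [Algebra ℝ A] (f : ℝ → ℝ) (a b : ℝ) (x : A) : A :=
  f a • 1 + slope f a b • (x - a • 1)

noncomputable def tent (m M t : ℝ) : ℝ := 1 / 2 - (M - m)⁻¹ * |t - (m + M) / 2|

lemma chord_add_chord {A : Type*} [Ring A] [Algebra ℝ A] {f : ℝ → ℝ} {a b : ℝ} {x y z w : A}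
    (h : x + y = z + w) : chord f a b x + chord f a b y = chord f a b z + chord f a b w := by
  simp only [chord]
  linear_combination (norm := module) slope f a b • h

lemma continuous_tent (m M : ℝ) : Continuous (tent m M) := by
  unfold tent; fun_prop

lemma continuous_chord (f : ℝ → ℝ) (a b : ℝ) : Continuous (chord f a b : ℝ → ℝ) := by
  unfold chord; fun_prop

section Scalar

variable {s : Set ℝ} {f : ℝ → ℝ} {a b m M t : ℝ}

lemma chord_real (f : ℝ → ℝ) (a b t : ℝ) : chord f a b t = f a + slope f a b * (t - a) := by
  simp [chord]

lemma chord_self (f : ℝ → ℝ) (a t : ℝ) : chord f a t t = f t := by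
  rw [chord_real, mul_comm, ← smul_eq_mul, sub_smul_slope, vsub_eq_sub, add_sub_cancel]

theorem ConvexOn.le_chord (hf : ConvexOn ℝ s f) (ha : a ∈ s) (hb : b ∈ s) (ht : t ∈ Icc a b) :
    f t ≤ chord f a b t := by
  obtain rfl | hat := ht.1.eq_or_lt
  · simp [chord_real]
  have hts : t ∈ s := hf.1.ordConnected.out ha hb ht
  have hslope : slope f a t ≤ slope f a b :=
    hf.slope_mono ha ⟨hts, hat.ne'⟩ ⟨hb, (hat.trans_le ht.2).ne'⟩ ht.2
  rw [← chord_self f a t, chord_real, chord_real]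
  gcongr

theorem ConvexOn.chord_le_of_le_or_le (hf : ConvexOn ℝ s f) (ha : a ∈ s) (hb : b ∈ s)
    (hab : a < b) (ht : t ∈ s) (hout : t ≤ a ∨ b ≤ t) : chord f a b t ≤ f t := by
  rw [← chord_self f a t, chord_real, chord_real, add_le_add_iff_left]
  rcases hout with hta | hbt
  · obtain rfl | hta := hta.eq_or_lt
    · simp
    exact mul_le_mul_of_nonpos_right
      (hf.slope_mono ha ⟨ht, hta.ne⟩ ⟨hb, hab.ne'⟩ (hta.trans hab).le) (by linarith)
  · exact mul_le_mul_of_nonneg_right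
      (hf.slope_mono ha ⟨hb, hab.ne'⟩ ⟨ht, (hab.trans_le hbt).ne'⟩ hbt) (by linarith)

lemma tent_nonneg (hmM : m < M) (ht : t ∈ Icc m M) : 0 ≤ tent m M t := by
  have habs : |t - (m + M) / 2| ≤ (M - m) / 2 := abs_le.mpr ⟨by linarith [ht.1], by linarith [ht.2]⟩
  have hMm : 0 < M - m := by linarith
  rw [tent, sub_nonneg, inv_mul_le_iff₀ hMm]
  linarith

/-- On each half of `[m, M]` both sides are affine in `t` and agree at the ends of that half. -/
lemma chord_eq_chord_add_mul_tent (f : ℝ → ℝ) (hmM : m < M) :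
    chord f m M t = (if t ≤ (m + M) / 2 then chord f m ((m + M) / 2) t
      else chord f ((m + M) / 2) M t) + (f m + f M - 2 * f ((m + M) / 2)) * tent m M t := by
  have hMm : M - m ≠ 0 := by linarith
  simp only [chord_real, slope_def_field, tent, inv_mul_eq_div]
  split_ifs with h
  · rw [abs_of_nonpos (by linarith), show (m + M) / 2 - m = (M - m) / 2 by ring]
    field_simp
    ring
  · rw [abs_of_pos (by linarith), show M - (m + M) / 2 = (M - m) / 2 by ring]
    field_simp
    ring

theorem ConvexOn.add_mul_tent_le_chord (hf : ConvexOn ℝ s f) (hm : m ∈ s) (hM : M ∈ s)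
    (hmM : m < M) (ht : t ∈ Icc m M) :
    f t + (f m + f M - 2 * f ((m + M) / 2)) * tent m M t ≤ chord f m M t := by
  have hc : (m + M) / 2 ∈ s := hf.1.ordConnected.out hm hM ⟨by linarith, by linarith⟩
  rw [chord_eq_chord_add_mul_tent f hmM, add_le_add_iff_right]
  split_ifs with h
  · exact hf.le_chord hm hc ⟨ht.1, h⟩
  · exact hf.le_chord hc hM ⟨(not_le.mp h).le, ht.2⟩

theorem ConvexOn.midpoint_defect_nonneg (hf : ConvexOn ℝ s f) (hm : m ∈ s) (hM : M ∈ s)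
    (hmM : m < M) : 0 ≤ f m + f M - 2 * f ((m + M) / 2) := by
  have h := hf.le_chord hm hM (t := (m + M) / 2) ⟨by linarith, by linarith⟩
  have hMm : M - m ≠ 0 := by linarith
  have hchord : (f M - f m) / (M - m) * ((m + M) / 2 - m) = (f M - f m) / 2 := by
    field_simp
    ring
  rw [chord_real, slope_def_field, hchord] at h
  linarith

end Scalar

section CFC

variable {A : Type*} [CStarAlgebra A] {f : ℝ → ℝ} {a b m M : ℝ} {x : A}

lemma cfc_chord (hx : IsSelfAdjoint x) : cfc (chord f a b : ℝ → ℝ) x = chord f a b x := by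
  have : (chord f a b : ℝ → ℝ) = fun t : ℝ => f a + slope f a b * (t - a) := by
    ext t; simp [chord]
  rw [this, cfc_add .., cfc_const_mul .., cfc_sub .., cfc_const .., cfc_const .., cfc_id' ..]
  simp [chord, Algebra.algebraMap_eq_smul_one]

lemma cfc_tent (hx : IsSelfAdjoint x) : cfc (tent m M) x =
    (1 / 2 : ℝ) • (1 : A) - (M - m)⁻¹ • cfc (fun t : ℝ => |t|) (x - ((m + M) / 2) • 1) := by
  have : tent m M = fun t => 1 / 2 - (M - m)⁻¹ * ((fun t : ℝ => |t|) ∘ (· - (m + M) / 2)) t := rfl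
  rw [this, cfc_sub _ _ x, cfc_const_mul _ _ x, cfc_comp _ _ x, cfc_sub _ _ x, cfc_const _ x,
    cfc_const _ x, cfc_id' ℝ x, Algebra.algebraMap_eq_smul_one, Algebra.algebraMap_eq_smul_one]

end CFC

section CStarAlgebra

variable {A : Type*} [CStarAlgebra A] [PartialOrder A] [StarOrderedRing A] {m M r : ℝ} {x : A}

lemma IsSelfAdjoint.of_smul_one_le (h : r • (1 : A) ≤ x) : IsSelfAdjoint x :=
  .of_ge h ((IsSelfAdjoint.all r).smul (.one A))

lemma IsSelfAdjoint.of_le_smul_one (h : x ≤ r • (1 : A)) : IsSelfAdjoint x :=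
  .of_le h ((IsSelfAdjoint.all r).smul (.one A))

lemma le_of_mem_spectrum_of_le_smul_one (h : x ≤ r • (1 : A)) {t : ℝ}
    (ht : t ∈ spectrum ℝ x) : t ≤ r := by
  have hx := IsSelfAdjoint.of_le_smul_one h
  rw [← Algebra.algebraMap_eq_smul_one, le_algebraMap_iff_spectrum_le hx] at h
  exact h t ht

lemma le_of_mem_spectrum_of_smul_one_le (h : r • (1 : A) ≤ x) {t : ℝ}
    (ht : t ∈ spectrum ℝ x) : r ≤ t := by
  have hx := IsSelfAdjoint.of_smul_one_le h
  rw [← Algebra.algebraMap_eq_smul_one, algebraMap_le_iff_le_spectrum hx] at h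
  exact h t ht

lemma spectrum_subset_Icc (hl : m • (1 : A) ≤ x) (hu : x ≤ M • 1) :
    spectrum ℝ x ⊆ Icc m M := fun _ ht =>
  ⟨le_of_mem_spectrum_of_smul_one_le hl ht, le_of_mem_spectrum_of_le_smul_one hu ht⟩

lemma cfc_tent_nonneg (hmM : m < M) (hl : m • (1 : A) ≤ x) (hu : x ≤ M • 1) :
    0 ≤ cfc (tent m M) x :=
  cfc_nonneg fun _ ht => tent_nonneg hmM (spectrum_subset_Icc hl hu ht)

end CStarAlgebra

section Estimates

variable {A : Type*} [CStarAlgebra A] [PartialOrder A] [StarOrderedRing A]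
  {f : ℝ → ℝ} {m M : ℝ} {s : Set ℝ} {x : A}

theorem ConvexOn.cfc_add_smul_cfc_tent_le_chord (hconv : ConvexOn ℝ s f) (hf : ContinuousOn f s)
    (hm : m ∈ s) (hM : M ∈ s) (hmM : m < M) (hl : m • (1 : A) ≤ x) (hu : x ≤ M • 1) :
    cfc f x + (f m + f M - 2 * f ((m + M) / 2)) • cfc (tent m M) x ≤ chord f m M x := by
  have hx := IsSelfAdjoint.of_smul_one_le hl
  have hspec := spectrum_subset_Icc hl hu
  have hfx : ContinuousOn f (spectrum ℝ x) := hf.mono (hspec.trans (hconv.1.ordConnected.out hm hM))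
  set δ := f m + f M - 2 * f ((m + M) / 2)
  have htent : ContinuousOn (fun t => δ * tent m M t) (spectrum ℝ x) :=
    (continuous_const.mul (continuous_tent m M)).continuousOn
  have key := cfc_mono (a := x) (fun t ht => hconv.add_mul_tent_le_chord hm hM hmM (hspec ht))
    (hfx.add htent) (continuous_chord f m M).continuousOn
  rwa [cfc_add x f _ hfx htent, cfc_const_mul _ _ x (continuous_tent m M).continuousOn,
    cfc_chord hx] at key

theorem ConvexOn.chord_le_cfc (hconv : ConvexOn ℝ s f) (hf : ContinuousOn f s)
    (hm : m ∈ s) (hM : M ∈ s) (hmM : m < M) (hxs : spectrum ℝ x ⊆ s)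
    (hout : x ≤ m • 1 ∨ M • 1 ≤ x) : chord f m M x ≤ cfc f x := by
  have hx : IsSelfAdjoint x := hout.elim .of_le_smul_one .of_smul_one_le
  rw [← cfc_chord hx]
  refine cfc_mono (fun t ht => hconv.chord_le_of_le_or_le hm hM hmM (hxs ht) ?_)
    (continuous_chord f m M).continuousOn (hf.mono hxs)
  exact hout.imp (le_of_mem_spectrum_of_le_smul_one · ht) (le_of_mem_spectrum_of_smul_one_le · ht)

end Estimates

section UnitalFamily

variable {A B : Type*} [CStarAlgebra A] [CStarAlgebra B] {ι : Type*} [Fintype ι]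
  {Φ : ι → A →ₗ[ℂ] B} {f : ℝ → ℝ} {a b m M : ℝ} {x : ι → A}

lemma sum_map_smul_one (hΦ1 : ∑ i, Φ i 1 = 1) (r : ℝ) : ∑ i, Φ i (r • 1) = r • 1 := by
  simp_rw [LinearMap.map_smul_of_tower, ← Finset.smul_sum, hΦ1]

lemma sum_map_chord (hΦ1 : ∑ i, Φ i 1 = 1) (x : ι → A) :
    ∑ i, Φ i (chord f a b (x i)) = chord f a b (∑ i, Φ i (x i)) := by
  simp only [chord, map_add, map_sub, LinearMap.map_smul_of_tower, Finset.sum_add_distrib,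
    Finset.sum_sub_distrib, ← Finset.smul_sum, hΦ1]

lemma sum_map_cfc_tent_add_cfc_tent (hΦ1 : ∑ i, Φ i 1 = 1) (hx : ∀ i, IsSelfAdjoint (x i))
    {y : B} (hy : IsSelfAdjoint y) :
    ∑ i, Φ i (cfc (tent m M) (x i)) + cfc (tent m M) y =
      1 - (M - m)⁻¹ • (∑ i, Φ i (cfc (fun t : ℝ => |t|) (x i - ((m + M) / 2) • 1)) +
        cfc (fun t : ℝ => |t|) (y - ((m + M) / 2) • 1)) := by
  simp only [cfc_tent (hx _), cfc_tent hy, map_sub, LinearMap.map_smul_of_tower,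
    Finset.sum_sub_distrib, ← Finset.smul_sum, hΦ1]
  module

end UnitalFamily

section UnitalPositiveFamily

variable {A B : Type*} [CStarAlgebra A] [PartialOrder A] [StarOrderedRing A]
  [CStarAlgebra B] [PartialOrder B] [StarOrderedRing B]
  {ι : Type*} [Fintype ι] {Φ : ι → A →ₗ[ℂ] B} {f : ℝ → ℝ} {m M r : ℝ} {s : Set ℝ} {x : ι → A}

lemma sum_map_mono (hΦpos : ∀ i, ∀ T, 0 ≤ T → 0 ≤ Φ i T) {y : ι → A} (h : ∀ i, x i ≤ y i) :
    ∑ i, Φ i (x i) ≤ ∑ i, Φ i (y i) :=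
  Finset.sum_le_sum fun i _ => (PositiveLinearMap.mk₀ (Φ i) (hΦpos i)).monotone' (h i)

lemma smul_one_le_sum_map (hΦpos : ∀ i, ∀ T, 0 ≤ T → 0 ≤ Φ i T) (hΦ1 : ∑ i, Φ i 1 = 1)
    (h : ∀ i, r • 1 ≤ x i) : r • 1 ≤ ∑ i, Φ i (x i) :=
  sum_map_smul_one hΦ1 r ▸ sum_map_mono hΦpos h

lemma sum_map_le_smul_one (hΦpos : ∀ i, ∀ T, 0 ≤ T → 0 ≤ Φ i T) (hΦ1 : ∑ i, Φ i 1 = 1)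
    (h : ∀ i, x i ≤ r • 1) : ∑ i, Φ i (x i) ≤ r • 1 :=
  sum_map_smul_one hΦ1 r ▸ sum_map_mono hΦpos h

lemma spectrum_sum_map_subset (hs : s.OrdConnected) (hΦpos : ∀ i, ∀ T, 0 ≤ T → 0 ≤ Φ i T)
    (hΦ1 : ∑ i, Φ i 1 = 1) (hr : r ∈ s) (hrx : ∀ i, r • 1 ≤ x i)
    (hxs : ∀ i, spectrum ℝ (x i) ⊆ s) : spectrum ℝ (∑ i, Φ i (x i)) ⊆ s := by
  set S := insert r (⋃ i, spectrum ℝ (x i))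
  have hS : IsCompact S := (isCompact_iUnion fun i => spectrum.isCompact (x i)).insert r
  have hSs : S ⊆ s := insert_subset hr (iUnion_subset hxs)
  have hxK : ∀ i, x i ≤ sSup S • 1 := fun i => by
    rw [← Algebra.algebraMap_eq_smul_one,
      le_algebraMap_iff_spectrum_le (IsSelfAdjoint.of_smul_one_le (hrx i))]
    exact fun t ht => le_csSup hS.bddAbove (mem_insert_of_mem _ (mem_iUnion_of_mem i ht))
  exact (spectrum_subset_Icc (smul_one_le_sum_map hΦpos hΦ1 hrx)
    (sum_map_le_smul_one hΦpos hΦ1 hxK)).trans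
    (hs.out hr (hSs (hS.sSup_mem (insert_nonempty _ _))))

theorem ConvexOn.sum_map_cfc_add_smul_le_chord (hconv : ConvexOn ℝ s f) (hf : ContinuousOn f s)
    (hm : m ∈ s) (hM : M ∈ s) (hmM : m < M) (hΦpos : ∀ i, ∀ T, 0 ≤ T → 0 ≤ Φ i T)
    (hΦ1 : ∑ i, Φ i 1 = 1) (hl : ∀ i, m • 1 ≤ x i) (hu : ∀ i, x i ≤ M • 1) :
    ∑ i, Φ i (cfc f (x i)) + (f m + f M - 2 * f ((m + M) / 2)) • ∑ i, Φ i (cfc (tent m M) (x i))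
      ≤ chord f m M (∑ i, Φ i (x i)) := by
  have key := sum_map_mono hΦpos fun i =>
    hconv.cfc_add_smul_cfc_tent_le_chord hf hm hM hmM (hl i) (hu i)
  simpa only [map_add, LinearMap.map_smul_of_tower, Finset.sum_add_distrib, ← Finset.smul_sum,
    sum_map_chord hΦ1] using key

theorem ConvexOn.chord_sum_map_le_sum_map_cfc (hconv : ConvexOn ℝ s f) (hf : ContinuousOn f s)
    (hm : m ∈ s) (hM : M ∈ s) (hmM : m < M) (hΦpos : ∀ i, ∀ T, 0 ≤ T → 0 ≤ Φ i T)
    (hΦ1 : ∑ i, Φ i 1 = 1) (hxs : ∀ i, spectrum ℝ (x i) ⊆ s)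
    (hout : ∀ i, x i ≤ m • 1 ∨ M • 1 ≤ x i) :
    chord f m M (∑ i, Φ i (x i)) ≤ ∑ i, Φ i (cfc f (x i)) :=
  sum_map_chord hΦ1 x ▸ sum_map_mono hΦpos fun i => hconv.chord_le_cfc hf hm hM hmM (hxs i) (hout i)

end UnitalPositiveFamily

theorem jensen_type_maps_three_general {H : Type*} [NormedAddCommGroup H] [InnerProductSpace ℂ H]
    [CompleteSpace H] {n : ℕ} (m M : ℝ) (hmM : m < M) (J : Set ℝ) (hJ : J.OrdConnected)
    (hJmM : Set.Icc m M ⊆ J) (f : ℝ → ℝ) (hf : ContinuousOn f J) (hconv : ConvexOn ℝ J f)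
    (A B C D : Fin n → H →L[ℂ] H)
    (hAspec : ∀ i, spectrum ℝ (A i) ⊆ J)
    (hDspec : ∀ i, spectrum ℝ (D i) ⊆ J)
    (hADBC : ∀ i, A i + D i = B i + C i)
    (hA : ∀ i, A i ≤ m • 1) (hBl : ∀ i, m • 1 ≤ B i) (hBu : ∀ i, B i ≤ M • 1)
    (hCl : ∀ i, m • 1 ≤ C i) (hCu : ∀ i, C i ≤ M • 1) (hD : ∀ i, M • 1 ≤ D i)
    (Φ : Fin n → (H →L[ℂ] H) →ₗ[ℂ] (H →L[ℂ] H))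
    (hΦpos : ∀ i, ∀ T : H →L[ℂ] H, 0 ≤ T → 0 ≤ Φ i T)
    (hΦ1 : ∑ i, Φ i 1 = (1 : H →L[ℂ] H)) :
    ∑ i, Φ i (cfc f (B i)) + cfc f (∑ i, Φ i (C i)) ≤
        cfc f (∑ i, Φ i (D i)) + ∑ i, Φ i (cfc f (A i)) -
          (f m + f M - 2 * f ((m + M) / 2)) •
            ((1 : H →L[ℂ] H) -
              (M - m)⁻¹ •
                (∑ i, Φ i (opAbs (B i - ((m + M) / 2) • 1)) +
                  opAbs (∑ i, Φ i (C i) - ((m + M) / 2) • 1))) ∧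
      cfc f (∑ i, Φ i (D i)) + ∑ i, Φ i (cfc f (A i)) -
          (f m + f M - 2 * f ((m + M) / 2)) •
            ((1 : H →L[ℂ] H) -
              (M - m)⁻¹ •
                (∑ i, Φ i (opAbs (B i - ((m + M) / 2) • 1)) +
                  opAbs (∑ i, Φ i (C i) - ((m + M) / 2) • 1))) ≤
        cfc f (∑ i, Φ i (D i)) + ∑ i, Φ i (cfc f (A i)) := by
  have hm : m ∈ J := hJmM ⟨le_rfl, hmM.le⟩
  have hM : M ∈ J := hJmM ⟨hmM.le, le_rfl⟩
  set C' := ∑ i, Φ i (C i)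
  set D' := ∑ i, Φ i (D i)
  have hC'l : m • 1 ≤ C' := smul_one_le_sum_map hΦpos hΦ1 hCl
  have hC'u : C' ≤ M • 1 := sum_map_le_smul_one hΦpos hΦ1 hCu
  unfold opAbs
  rw [← sum_map_cfc_tent_add_cfc_tent hΦ1 (fun i => .of_smul_one_le (hBl i)) (.of_smul_one_le hC'l)]
  refine ⟨?_, sub_le_self _ (smul_nonneg (hconv.midpoint_defect_nonneg hm hM hmM) ?_)⟩
  · rw [le_sub_iff_add_le]
    calc _ = (∑ i, Φ i (cfc f (B i)) + (f m + f M - 2 * f ((m + M) / 2)) •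
            ∑ i, Φ i (cfc (tent m M) (B i))) +
          (cfc f C' + (f m + f M - 2 * f ((m + M) / 2)) • cfc (tent m M) C') := by module
      _ ≤ chord f m M (∑ i, Φ i (B i)) + chord f m M C' :=
        add_le_add (hconv.sum_map_cfc_add_smul_le_chord hf hm hM hmM hΦpos hΦ1 hBl hBu)
          (hconv.cfc_add_smul_cfc_tent_le_chord hf hm hM hmM hC'l hC'u)
      _ = chord f m M (∑ i, Φ i (A i)) + chord f m M D' := chord_add_chord (by
        simp only [C', D', ← Finset.sum_add_distrib, ← map_add, hADBC])
      _ ≤ ∑ i, Φ i (cfc f (A i)) + cfc f D' :=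
        add_le_add (hconv.chord_sum_map_le_sum_map_cfc hf hm hM hmM hΦpos hΦ1 hAspec
            fun i => .inl (hA i))
          (hconv.chord_le_cfc hf hm hM hmM (spectrum_sum_map_subset hJ hΦpos hΦ1 hM hD hDspec)
            (.inr (smul_one_le_sum_map hΦpos hΦ1 hD)))
      _ = _ := add_comm _ _
  · exact add_nonneg (Finset.sum_nonneg fun i _ => hΦpos i _ (cfc_tent_nonneg hmM (hBl i) (hBu i)))
      (cfc_tent_nonneg hmM hC'l hC'u)

/-- **Corollary 2.5 (3) of the paper.** -/
theorem jensen_type_maps_three {H : Type*} [NormedAddCommGroup H] [InnerProductSpace ℂ H]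
    [CompleteSpace H] {n : ℕ} (m M : ℝ) (hmM : m < M) (J : Set ℝ) (hJ : J.OrdConnected)
    (hJmM : Set.Icc m M ⊆ J) (f : ℝ → ℝ) (hf : ContinuousOn f J) (hconv : ConvexOn ℝ J f)
    (A B C D : Fin n → H →L[ℂ] H)
    (hAsa : ∀ i, IsSelfAdjoint (A i)) (hAspec : ∀ i, spectrum ℝ (A i) ⊆ J)
    (hBsa : ∀ i, IsSelfAdjoint (B i)) (hBspec : ∀ i, spectrum ℝ (B i) ⊆ J)
    (hCsa : ∀ i, IsSelfAdjoint (C i)) (hCspec : ∀ i, spectrum ℝ (C i) ⊆ J)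
    (hDsa : ∀ i, IsSelfAdjoint (D i)) (hDspec : ∀ i, spectrum ℝ (D i) ⊆ J)
    (hADBC : ∀ i, A i + D i = B i + C i)
    (hA : ∀ i, A i ≤ m • 1) (hBl : ∀ i, m • 1 ≤ B i) (hBu : ∀ i, B i ≤ M • 1)
    (hCl : ∀ i, m • 1 ≤ C i) (hCu : ∀ i, C i ≤ M • 1) (hD : ∀ i, M • 1 ≤ D i)
    (Φ : Fin n → (H →L[ℂ] H) →ₗ[ℂ] (H →L[ℂ] H))
    (hΦpos : ∀ i, ∀ T : H →L[ℂ] H, 0 ≤ T → 0 ≤ Φ i T)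
    (hΦ1 : ∑ i, Φ i 1 = (1 : H →L[ℂ] H)) :
    ∑ i, Φ i (cfc f (B i)) + cfc f (∑ i, Φ i (C i)) ≤
        cfc f (∑ i, Φ i (D i)) + ∑ i, Φ i (cfc f (A i)) -
          (f m + f M - 2 * f ((m + M) / 2)) •
            ((1 : H →L[ℂ] H) -
              (M - m)⁻¹ •
                (∑ i, Φ i (opAbs (B i - ((m + M) / 2) • 1)) +
                  opAbs (∑ i, Φ i (C i) - ((m + M) / 2) • 1))) ∧
      cfc f (∑ i, Φ i (D i)) + ∑ i, Φ i (cfc f (A i)) -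
          (f m + f M - 2 * f ((m + M) / 2)) •
            ((1 : H →L[ℂ] H) -
              (M - m)⁻¹ •
                (∑ i, Φ i (opAbs (B i - ((m + M) / 2) • 1)) +
                  opAbs (∑ i, Φ i (C i) - ((m + M) / 2) • 1))) ≤
        cfc f (∑ i, Φ i (D i)) + ∑ i, Φ i (cfc f (A i)) :=
  jensen_type_maps_three_general m M hmM J hJ hJmM f hf hconv A B C D hAspec hDspec hADBC hA hBl hBu
    hCl hCu hD Φ hΦpos hΦ1
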